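/- Fix real numbers λ > 0 and t > 0, and define W : {-1,1} × {-1,0,1} → ℝ by W(a,b) = λ if b = a, W(a,b) = λ·t if b = 0, and W(a,b) = 0 if b = -a. Then for all σ, ν ∈ {-1,0,1}: W(1, max(σ,ν)) · W(-1, min(σ,ν)) ≥ W(1, σ) · W(-1, ν). -/
import Mathlib

/-- The single-edge FKG verification for the extended Ising vertex–edge weight
`W(a,b) = λ·(δ_{a,b} + t·δ_{b,0})`: for all edge spins `σ, ν ∈ {-1,0,1}`,
`W(1, max(σ,ν)) · W(-1, min(σ,ν)) ≥ W(1, σ) · W(-1, ν)`. -/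
theorem extended_ising_weight_fkg (l t : ℝ) (hl : 0 < l) (ht : 0 < t)
    (W : ℤ → ℤ → ℝ)
    (hW : ∀ a b : ℤ, (a = -1 ∨ a = 1) → (b = -1 ∨ b = 0 ∨ b = 1) →
      W a b = if b = a then l else if b = 0 then l * t else 0)
    (σ ν : ℤ) (hσ : σ = -1 ∨ σ = 0 ∨ σ = 1) (hν : ν = -1 ∨ ν = 0 ∨ ν = 1) :
    W 1 σ * W (-1) ν ≤ W 1 (max σ ν) * W (-1) (min σ ν) := by
  rcases hσ with rfl | rfl | rfl <;> rcases hν with rfl | rfl | rfl <;>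
    simp_all [hW, mul_pos, le_of_lt, mul_pos hl ht, hl.le]
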